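/- The function A(k) = π - π·∑_{i=1}^{∞} (1/((2i-1)(i+1)))·((2i-1)!!/(2i)!!)²·k^{2i} is monotonically decreasing on [0,1], with A(0) = π and A(1) = 8/3; consequently 8/3 ≤ A(k) ≤ π for all k ∈ [0,1]. -/

import Mathlib

open Real

noncomputable def eggArea (k : ℝ) : ℝ :=
  π - π * ∑' i : ℕ,
    1 / ((2 * (i : ℝ) + 1) * ((i : ℝ) + 2))
      * ((Nat.doubleFactorial (2 * i + 1) : ℝ) / (Nat.doubleFactorial (2 * i + 2))) ^ 2
      * k ^ (2 * (i + 1))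

/-!
Writing `r i = (2i+1)‼ / (2i+2)‼`, the coefficients `r i ^ 2 / ((2i+1)(i+2))` telescope against
`t i = 4(i+1)(4i+3) / (3(2i+1)) * r i ^ 2`, and `t 0 = 1`. Since `1 / ((2n+3) r n ^ 2)` is a partial
Wallis product, `t n → 8 / (3π)`, so the coefficients sum to `1 - 8 / (3π)` and `A 1 = 8 / 3`.
Monotonicity holds because the coefficients are nonnegative and `k ↦ k ^ (2(i+1))` is monotone.
-/

open Filter Finset Topology

theorem Antitone.hasSum_sub_succ {f : ℕ → ℝ} {l : ℝ} (hf : Antitone f)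
    (hl : Tendsto f atTop (𝓝 l)) : HasSum (fun n => f n - f (n + 1)) (f 0 - l) := by
  rw [hasSum_iff_tendsto_nat_of_nonneg fun n => sub_nonneg.2 (hf n.le_succ)]
  simp_rw [sum_range_sub']
  exact tendsto_const_nhds.sub hl

theorem monotoneOn_tsum_mul_pow {c : ℕ → ℝ} (hc : ∀ i, 0 ≤ c i) (hs : Summable c) (e : ℕ → ℕ) :
    MonotoneOn (fun k : ℝ => ∑' i, c i * k ^ e i) (Set.Icc 0 1) := by
  have summable {k : ℝ} (hk : k ∈ Set.Icc 0 1) : Summable fun i => c i * k ^ e i :=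
    hs.of_nonneg_of_le (fun i => mul_nonneg (hc i) (pow_nonneg hk.1 _))
      fun i => mul_le_of_le_one_right (hc i) (pow_le_one₀ hk.1 hk.2)
  intro k₁ hk₁ k₂ hk₂ h
  exact (summable hk₁).tsum_le_tsum
    (fun i => mul_le_mul_of_nonneg_left (pow_le_pow_left₀ hk₁.1 h _) (hc i)) (summable hk₂)

noncomputable def wallisRatio (i : ℕ) : ℝ :=
  (Nat.doubleFactorial (2 * i + 1) : ℝ) / Nat.doubleFactorial (2 * i + 2)

theorem wallisRatio_pos (i : ℕ) : 0 < wallisRatio i := by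
  have := Nat.doubleFactorial_pos (2 * i + 1)
  have := Nat.doubleFactorial_pos (2 * i + 2)
  unfold wallisRatio
  positivity

theorem wallisRatio_zero : wallisRatio 0 = 1 / 2 := by
  norm_num [wallisRatio, Nat.doubleFactorial]

theorem wallisRatio_succ (i : ℕ) :
    wallisRatio (i + 1) = wallisRatio i * ((2 * i + 3) / (2 * i + 4)) := by
  have hodd : 2 * (i + 1) + 1 = 2 * i + 1 + 2 := by ring
  have heven : 2 * (i + 1) + 2 = 2 * i + 2 + 2 := by ring
  have hpos := Nat.doubleFactorial_pos (2 * i + 2)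
  rw [wallisRatio, wallisRatio, hodd, heven, Nat.doubleFactorial_add_two,
    Nat.doubleFactorial_add_two]
  push_cast
  field_simp
  ring

theorem Real.Wallis.W_succ_eq_inv_wallisRatio_sq (n : ℕ) :
    Real.Wallis.W (n + 1) = ((2 * n + 3) * wallisRatio n ^ 2)⁻¹ := by
  induction n with
  | zero =>
    norm_num [Real.Wallis.W, wallisRatio_zero]
  | succ n ih =>
    have hr := (wallisRatio_pos n).ne'
    rw [Real.Wallis.W_succ, ih, wallisRatio_succ]
    push_cast
    field_simp
    ring

theorem tendsto_mul_wallisRatio_sq :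
    Tendsto (fun n : ℕ => (2 * n + 3) * wallisRatio n ^ 2) atTop (𝓝 (2 / π)) := by
  have hW := (Real.Wallis.tendsto_W_nhds_pi_div_two.comp (tendsto_add_atTop_nat 1)).inv₀
    (by positivity)
  simp only [Function.comp_def, Real.Wallis.W_succ_eq_inv_wallisRatio_sq, inv_inv] at hW
  simpa using hW

noncomputable def eggCoeff (i : ℕ) : ℝ :=
  1 / ((2 * (i : ℝ) + 1) * ((i : ℝ) + 2)) * wallisRatio i ^ 2

-- `eggTail i - 8 / (3π)` is the tail sum `∑_{j ≥ i} eggCoeff j`.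
noncomputable def eggTail (i : ℕ) : ℝ :=
  4 * ((i : ℝ) + 1) * (4 * i + 3) / (3 * (2 * i + 1)) * wallisRatio i ^ 2

theorem eggCoeff_nonneg (i : ℕ) : 0 ≤ eggCoeff i := by
  unfold eggCoeff
  positivity

theorem eggTail_sub_succ (i : ℕ) : eggTail i - eggTail (i + 1) = eggCoeff i := by
  rw [eggTail, eggTail, eggCoeff, wallisRatio_succ]
  push_cast
  field_simp
  ring

theorem eggTail_zero : eggTail 0 = 1 := by
  norm_num [eggTail, wallisRatio_zero]

theorem tendsto_eggTail : Tendsto eggTail atTop (𝓝 (8 / (3 * π))) := by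
  have h₁ := tendsto_add_mul_div_add_mul_atTop_nhds (4 : ℝ) 1 4 (d := 2) two_ne_zero
  have h₂ := tendsto_add_mul_div_add_mul_atTop_nhds (3 : ℝ) 9 4 (d := 6) (by norm_num)
  convert (h₁.mul h₂).mul tendsto_mul_wallisRatio_sq using 1
  · funext n
    rw [eggTail]
    field_simp
    ring
  · congr 1
    ring

theorem hasSum_eggCoeff : HasSum eggCoeff (1 - 8 / (3 * π)) := by
  have hanti : Antitone eggTail :=
    antitone_nat_of_succ_le fun i => sub_nonneg.1 (eggTail_sub_succ i ▸ eggCoeff_nonneg i)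
  simpa [eggTail_sub_succ, eggTail_zero] using hanti.hasSum_sub_succ tendsto_eggTail

theorem eggArea_antitone_and_bounds :
    AntitoneOn eggArea (Set.Icc 0 1) ∧ eggArea 0 = π ∧ eggArea 1 = 8 / 3
      ∧ ∀ k ∈ Set.Icc (0:ℝ) 1, 8 / 3 ≤ eggArea k ∧ eggArea k ≤ π := by
  have hA : eggArea = fun k => π - π * ∑' i, eggCoeff i * k ^ (2 * (i + 1)) := rfl
  have hanti : AntitoneOn eggArea (Set.Icc 0 1) := fun k₁ hk₁ k₂ hk₂ h =>
    sub_le_sub_left (mul_le_mul_of_nonneg_left (monotoneOn_tsum_mul_pow eggCoeff_nonneg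
      hasSum_eggCoeff.summable (fun i => 2 * (i + 1)) hk₁ hk₂ h) pi_pos.le) π
  have h0 : eggArea 0 = π := by simp [hA]
  have h1 : eggArea 1 = 8 / 3 := by
    simp only [hA, one_pow, mul_one, hasSum_eggCoeff.tsum_eq]
    field_simp
    ring
  refine ⟨hanti, h0, h1, fun k hk => ⟨?_, ?_⟩⟩
  · exact h1 ▸ hanti hk (Set.right_mem_Icc.2 zero_le_one) hk.2
  · exact h0 ▸ hanti (Set.left_mem_Icc.2 zero_le_one) hk hk.1
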